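/- arXiv:2211.10209 — 6 statements merged into one kernel-verified Lean document; each statement's English description precedes it below -/
import Mathlib

section
/- Let Ω be a finite probability space with probability measure P, and let Ŷ, S : Ω → {0,1} be random variables with P(S=0) > 0 and P(S=1) > 0. For a function b : {0,1} → {0,1}, define its balanced accuracy as BA(b) = ½(P(b∘Ŷ = 0 | S=0) + P(b∘Ŷ = 1 | S=1)). Then the maximum of BA(b) over all four functions b : {0,1} → {0,1} equals ½(1 + |P(Ŷ=1 | S=1) − P(Ŷ=1 | S=0)|). -/
open scoped Classical
noncomputable section

/-- Probability of an event under weight function `p` on a finite sample space. -/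
def Pr {Omega : Type*} [Fintype Omega] (p : Omega → ℝ) (A : Omega → Prop) : ℝ :=
  ∑ ω, if A ω then p ω else 0

/-- Conditional probability `P(A | B)`. -/
def cPr {Omega : Type*} [Fintype Omega] (p : Omega → ℝ) (A B : Omega → Prop) : ℝ :=
  Pr p (fun ω => A ω ∧ B ω) / Pr p B

lemma Pr_congr {Omega : Type*} [Fintype Omega] (p : Omega → ℝ) {A A' : Omega → Prop}
    (h : ∀ ω, A ω ↔ A' ω) : Pr p A = Pr p A' := by
  unfold Pr; exact Finset.sum_congr rfl fun ω _ => by simp [h ω]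

lemma cPr_congr {Omega : Type*} [Fintype Omega] (p : Omega → ℝ) {A A' B : Omega → Prop}
    (h : ∀ ω, A ω ↔ A' ω) : cPr p A B = cPr p A' B := by
  unfold cPr
  rw [Pr_congr p (A := fun ω => A ω ∧ B ω) (A' := fun ω => A' ω ∧ B ω)
    (fun ω => and_congr_left' (h ω))]

lemma cPr_true {Omega : Type*} [Fintype Omega] (p : Omega → ℝ) {B : Omega → Prop}
    (hB : Pr p B ≠ 0) : cPr p (fun _ => True) B = 1 := by
  unfold cPr
  rw [Pr_congr p (A := fun ω => True ∧ B ω) (A' := B) (fun ω => by simp)]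
  field_simp

lemma cPr_false {Omega : Type*} [Fintype Omega] (p : Omega → ℝ) {B : Omega → Prop} :
    cPr p (fun _ => False) B = 0 := by
  unfold cPr Pr; simp

lemma cPr_compl {Omega : Type*} [Fintype Omega] (p : Omega → ℝ) {A B : Omega → Prop}
    (hB : Pr p B ≠ 0) : cPr p (fun ω => ¬ A ω) B = 1 - cPr p A B := by
  have hadd : Pr p (fun ω => A ω ∧ B ω) + Pr p (fun ω => ¬ A ω ∧ B ω) = Pr p B := by
    unfold Pr
    rw [← Finset.sum_add_distrib]
    exact Finset.sum_congr rfl fun ω _ => by by_cases hA : A ω <;> by_cases hBω : B ω <;> simp [hA, hBω]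
  unfold cPr
  field_simp
  linarith

theorem stmt_0 {Omega : Type*} [Fintype Omega] (p : Omega → ℝ)
    (hp : ∀ ω, 0 ≤ p ω) (hsum : ∑ ω, p ω = 1)
    (Yh S : Omega → Fin 2)
    (hS0 : 0 < Pr p (fun ω => S ω = 0)) (hS1 : 0 < Pr p (fun ω => S ω = 1)) :
    (⨆ b : Fin 2 → Fin 2,
      (cPr p (fun ω => b (Yh ω) = 0) (fun ω => S ω = 0)
        + cPr p (fun ω => b (Yh ω) = 1) (fun ω => S ω = 1)) / 2)
    = (1 + |cPr p (fun ω => Yh ω = 1) (fun ω => S ω = 1)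
          - cPr p (fun ω => Yh ω = 1) (fun ω => S ω = 0)|) / 2 := by
  have hS0' : Pr p (fun ω => S ω = 0) ≠ 0 := ne_of_gt hS0
  have hS1' : Pr p (fun ω => S ω = 1) ≠ 0 := ne_of_gt hS1
  set a1 := cPr p (fun ω => Yh ω = 1) (fun ω => S ω = 1) with ha1
  set a0 := cPr p (fun ω => Yh ω = 1) (fun ω => S ω = 0) with ha0
  have hfin2 : ∀ v : Fin 2, v = 0 ∨ v = 1 := by decide
  -- complement formulas
  have hc0 : cPr p (fun ω => Yh ω = 0) (fun ω => S ω = 0) = 1 - a0 := by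
    rw [cPr_congr p (A' := fun ω => ¬ Yh ω = 1)
      (fun ω => by rcases hfin2 (Yh ω) with h | h <;> simp [h])]
    exact cPr_compl p hS0'
  have hc1 : cPr p (fun ω => Yh ω = 0) (fun ω => S ω = 1) = 1 - a1 := by
    rw [cPr_congr p (A' := fun ω => ¬ Yh ω = 1)
      (fun ω => by rcases hfin2 (Yh ω) with h | h <;> simp [h])]
    exact cPr_compl p hS1'
  -- value of the balanced accuracy for each b
  have hval : ∀ b : Fin 2 → Fin 2,
      ((cPr p (fun ω => b (Yh ω) = 0) (fun ω => S ω = 0)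
        + cPr p (fun ω => b (Yh ω) = 1) (fun ω => S ω = 1)) / 2)
      = (1:ℝ)/2 ∨
      ((cPr p (fun ω => b (Yh ω) = 0) (fun ω => S ω = 0)
        + cPr p (fun ω => b (Yh ω) = 1) (fun ω => S ω = 1)) / 2)
      = (1 + (a1 - a0)) / 2 ∨
      ((cPr p (fun ω => b (Yh ω) = 0) (fun ω => S ω = 0)
        + cPr p (fun ω => b (Yh ω) = 1) (fun ω => S ω = 1)) / 2)
      = (1 - (a1 - a0)) / 2 := by
    intro b
    rcases hfin2 (b 0) with hb0 | hb0 <;> rcases hfin2 (b 1) with hb1 | hb1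
    · left
      rw [cPr_congr p (A' := fun _ => True)
          (fun ω => by rcases hfin2 (Yh ω) with h | h <;> simp [h, hb0, hb1]),
        cPr_congr p (A := fun ω => b (Yh ω) = 1) (A' := fun _ => False)
          (fun ω => by rcases hfin2 (Yh ω) with h | h <;> simp [h, hb0, hb1]),
        cPr_true p hS0', cPr_false p]
      norm_num
    · right; left
      rw [cPr_congr p (A' := fun ω => Yh ω = 0)
          (fun ω => by rcases hfin2 (Yh ω) with h | h <;> simp [h, hb0, hb1]),
        cPr_congr p (A := fun ω => b (Yh ω) = 1) (A' := fun ω => Yh ω = 1)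
          (fun ω => by rcases hfin2 (Yh ω) with h | h <;> simp [h, hb0, hb1]),
        hc0, ← ha1]
      ring_nf
    · right; right
      rw [cPr_congr p (A' := fun ω => Yh ω = 1)
          (fun ω => by rcases hfin2 (Yh ω) with h | h <;> simp [h, hb0, hb1]),
        cPr_congr p (A := fun ω => b (Yh ω) = 1) (A' := fun ω => Yh ω = 0)
          (fun ω => by rcases hfin2 (Yh ω) with h | h <;> simp [h, hb0, hb1]),
        hc1, ← ha0]
      ring_nf
    · left
      rw [cPr_congr p (A' := fun _ => False)
          (fun ω => by rcases hfin2 (Yh ω) with h | h <;> simp [h, hb0, hb1]),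
        cPr_congr p (A := fun ω => b (Yh ω) = 1) (A' := fun _ => True)
          (fun ω => by rcases hfin2 (Yh ω) with h | h <;> simp [h, hb0, hb1]),
        cPr_true p hS1', cPr_false p]
      norm_num
  have hbdd : BddAbove (Set.range (fun b : Fin 2 → Fin 2 =>
      (cPr p (fun ω => b (Yh ω) = 0) (fun ω => S ω = 0)
        + cPr p (fun ω => b (Yh ω) = 1) (fun ω => S ω = 1)) / 2)) :=
    (Set.finite_range _).bddAbove
  apply le_antisymm
  · apply ciSup_le
    intro b
    have habs := le_abs_self (a1 - a0)
    have habs' := neg_abs_le (a1 - a0)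
    have hnn := abs_nonneg (a1 - a0)
    rcases hval b with h | h | h <;> rw [h] <;> linarith
  · rcases abs_cases (a1 - a0) with ⟨habs, hsign⟩ | ⟨habs, hsign⟩
    · have key : ((cPr p (fun ω => (id : Fin 2 → Fin 2) (Yh ω) = 0) (fun ω => S ω = 0)
          + cPr p (fun ω => (id : Fin 2 → Fin 2) (Yh ω) = 1) (fun ω => S ω = 1)) / 2)
          = (1 + (a1 - a0)) / 2 := by
        rcases hval id with h | h | h
        · simp only [id] at h
          rw [hc0] at h; rw [← ha1] at h
          -- h : (1 - a0 + a1)/2 = 1/2 impossible unless a1 = a0; but then also goal holds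
          simp only [id]; rw [hc0, ← ha1]; linarith
        · exact h
        · simp only [id] at h ⊢
          rw [hc0, ← ha1] at h ⊢; linarith
      rw [habs, ← key]
      exact le_ciSup hbdd id
    · set bneg : Fin 2 → Fin 2 := fun v => 1 - v with hbneg
      have key : ((cPr p (fun ω => bneg (Yh ω) = 0) (fun ω => S ω = 0)
          + cPr p (fun ω => bneg (Yh ω) = 1) (fun ω => S ω = 1)) / 2)
          = (1 - (a1 - a0)) / 2 := by
        have h0 : bneg 0 = 1 := by decide
        have h1 : bneg 1 = 0 := by decide
        rw [cPr_congr p (A' := fun ω => Yh ω = 1)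
            (fun ω => by rcases hfin2 (Yh ω) with h | h <;> simp [h, h0, h1]),
          cPr_congr p (A := fun ω => bneg (Yh ω) = 1) (A' := fun ω => Yh ω = 0)
            (fun ω => by rcases hfin2 (Yh ω) with h | h <;> simp [h, h0, h1]),
          hc1, ← ha0]
        ring
      rw [habs, show (1 + -(a1 - a0)) / 2 = (1 - (a1 - a0)) / 2 by ring, ← key]
      exact le_ciSup hbdd bneg
end
end

section
/- Let Ω be a finite probability space, and Ŷ, S : Ω → {0,1} random variables with P(S=0) > 0 and P(S=1) > 0. If Ŷ satisfies demographic parity, i.e. P(Ŷ=0 | S=0) = P(Ŷ=0 | S=1), then for every function b : {0,1} → {0,1}, the balanced accuracy ½(P(b∘Ŷ=0 | S=0) + P(b∘Ŷ=1 | S=1)) equals ½. -/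
open scoped Classical
noncomputable section

/-! Since `Ŷ` takes only two values, parity for the event `Ŷ = 0` gives, by complement, the same
conditional law of `Ŷ` given `S = 0` and given `S = 1`, hence the same law of every `b ∘ Ŷ`.
The balanced accuracy of `b` is then `(P(b ∘ Ŷ = 0 | S = 1) + P(b ∘ Ŷ = 1 | S = 1)) / 2 = 1 / 2`. -/

section

variable {Omega : Type*} [Fintype Omega] (p : Omega → ℝ)

theorem Pr_and_add_Pr_not_and (A B : Omega → Prop) :
    Pr p (fun ω => A ω ∧ B ω) + Pr p (fun ω => ¬A ω ∧ B ω) = Pr p B := by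
  unfold Pr
  rw [← Finset.sum_add_distrib]
  refine Finset.sum_congr rfl fun ω _ => ?_
  by_cases hA : A ω <;> simp [hA]

theorem cPr_add_cPr_not {B : Omega → Prop} (hB : Pr p B ≠ 0) (A : Omega → Prop) :
    cPr p A B + cPr p (fun ω => ¬A ω) B = 1 := by
  rw [cPr, cPr, ← add_div, Pr_and_add_Pr_not_and, div_self hB]

theorem cPr_eq_zero_add_cPr_eq_one {B : Omega → Prop} (hB : Pr p B ≠ 0) (X : Omega → Fin 2) :
    cPr p (fun ω => X ω = 0) B + cPr p (fun ω => X ω = 1) B = 1 := by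
  have hcompl : (fun ω => X ω = 1) = fun ω => ¬X ω = 0 := funext fun ω => propext (by omega)
  rw [hcompl, cPr_add_cPr_not p hB]

theorem Pr_comp_and_eq_sum {α : Type*} [Fintype α] (X : Omega → α) (Q : α → Prop)
    (B : Omega → Prop) :
    Pr p (fun ω => Q (X ω) ∧ B ω) = ∑ y with Q y, Pr p (fun ω => X ω = y ∧ B ω) := by
  unfold Pr
  rw [Finset.sum_comm]
  refine Finset.sum_congr rfl fun ω _ => ?_
  by_cases hB : B ω <;> simp [hB, Finset.sum_ite_eq]

theorem cPr_comp_eq_sum {α : Type*} [Fintype α] (X : Omega → α) (Q : α → Prop)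
    (B : Omega → Prop) :
    cPr p (fun ω => Q (X ω)) B = ∑ y with Q y, cPr p (fun ω => X ω = y) B := by
  simp only [cPr, Pr_comp_and_eq_sum, Finset.sum_div]

theorem cPr_comp_congr {α : Type*} [Fintype α] (X : Omega → α) {B B' : Omega → Prop}
    (h : ∀ y, cPr p (fun ω => X ω = y) B = cPr p (fun ω => X ω = y) B') (Q : α → Prop) :
    cPr p (fun ω => Q (X ω)) B = cPr p (fun ω => Q (X ω)) B' := by
  rw [cPr_comp_eq_sum, cPr_comp_eq_sum]
  exact Finset.sum_congr rfl fun y _ => h y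

end

theorem stmt_1_general {Omega : Type*} [Fintype Omega] (p : Omega → ℝ)
    (Yh S : Omega → Fin 2)
    (hS0 : 0 < Pr p (fun ω => S ω = 0)) (hS1 : 0 < Pr p (fun ω => S ω = 1))
    (hdp : cPr p (fun ω => Yh ω = 0) (fun ω => S ω = 0)
         = cPr p (fun ω => Yh ω = 0) (fun ω => S ω = 1)) :
    ∀ b : Fin 2 → Fin 2,
      (cPr p (fun ω => b (Yh ω) = 0) (fun ω => S ω = 0)
        + cPr p (fun ω => b (Yh ω) = 1) (fun ω => S ω = 1)) / 2 = 1 / 2 := by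
  intro b
  have hparity : ∀ y, cPr p (fun ω => Yh ω = y) (fun ω => S ω = 0)
      = cPr p (fun ω => Yh ω = y) (fun ω => S ω = 1) := by
    have h0 := cPr_eq_zero_add_cPr_eq_one p hS0.ne' Yh
    have h1 := cPr_eq_zero_add_cPr_eq_one p hS1.ne' Yh
    intro y
    fin_cases y
    · exact hdp
    · simp only [Fin.mk_one]
      linarith
  have hb0 := cPr_comp_congr p Yh hparity (fun y => b y = 0)
  have hsum := cPr_eq_zero_add_cPr_eq_one p hS1.ne' (fun ω => b (Yh ω))
  linarith

theorem stmt_1 {Omega : Type*} [Fintype Omega] (p : Omega → ℝ)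
    (hp : ∀ ω, 0 ≤ p ω) (hsum : ∑ ω, p ω = 1)
    (Yh S : Omega → Fin 2)
    (hS0 : 0 < Pr p (fun ω => S ω = 0)) (hS1 : 0 < Pr p (fun ω => S ω = 1))
    (hdp : cPr p (fun ω => Yh ω = 0) (fun ω => S ω = 0)
         = cPr p (fun ω => Yh ω = 0) (fun ω => S ω = 1)) :
    ∀ b : Fin 2 → Fin 2,
      (cPr p (fun ω => b (Yh ω) = 0) (fun ω => S ω = 0)
        + cPr p (fun ω => b (Yh ω) = 1) (fun ω => S ω = 1)) / 2 = 1 / 2 :=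
  stmt_1_general p Yh S hS0 hS1 hdp
end
end

section
/- Let Ω be a finite probability space with binary random variables Ŷ, Y, S : Ω → {0,1}, with all events (S=s, Y=y) of positive probability, and suppose Ŷ satisfies equalized odds with respect to Y and S. If Y is independent of S, then for every attack function a : {0,1} → {0,1}, the balanced accuracy ½(P(a∘Ŷ=0 | S=0) + P(a∘Ŷ=1 | S=1)) equals ½. -/
open scoped Classical
noncomputable section

/-! Conditioning on `Y`,
`P(a ∘ Ŷ = c | S = s) = ∑ y, P(a ∘ Ŷ = c | S = s, Y = y) * P(Y = y | S = s)`.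
Equalized odds makes the first factor independent of `s` (also after composing with `a`), and
independence of `Y` and `S` turns the second into `P(Y = y)`. So `P(a ∘ Ŷ = c | S = s)` does not
depend on `s`, and the balanced accuracy becomes `(P(a ∘ Ŷ = 0 | S = 1) + P(a ∘ Ŷ = 1 | S = 1)) / 2`,
which is `1 / 2`. -/

namespace Pr

variable {Omega α β : Type*} [Fintype Omega] [Fintype α] (p : Omega → ℝ)

theorem congr_event {A B : Omega → Prop} (h : ∀ ω, A ω ↔ B ω) : Pr p A = Pr p B := by
  simp only [Pr, h]

theorem eq_sum_fiber (f : Omega → α) (A : Omega → Prop) :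
    Pr p A = ∑ v, Pr p (fun ω => A ω ∧ f ω = v) := by
  unfold Pr
  rw [Finset.sum_comm]
  refine Finset.sum_congr rfl fun ω _ => ?_
  by_cases hA : A ω <;> simp [hA]

theorem eq_zero_of_forall_not {A : Omega → Prop} (h : ∀ ω, ¬ A ω) : Pr p A = 0 := by
  simp [Pr, h]

theorem comp_and_eq_sum (f : Omega → α) (g : α → β) (c : β) (B : Omega → Prop) :
    Pr p (fun ω => g (f ω) = c ∧ B ω)
      = ∑ v with g v = c, Pr p (fun ω => f ω = v ∧ B ω) := by
  rw [eq_sum_fiber p f, Finset.sum_filter]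
  refine Finset.sum_congr rfl fun v _ => ?_
  split_ifs with hv
  · exact congr_event p fun ω => by constructor <;> rintro ⟨h₁, h₂⟩ <;> simp_all
  · exact eq_zero_of_forall_not p fun ω ⟨⟨hc, _⟩, hf⟩ => hv (hf ▸ hc)

theorem and_eq_sum_cPr_mul (A B : Omega → Prop) (Y : Omega → α)
    (hBY : ∀ y, Pr p (fun ω => B ω ∧ Y ω = y) ≠ 0) :
    Pr p (fun ω => A ω ∧ B ω)
      = ∑ y, cPr p A (fun ω => B ω ∧ Y ω = y) * Pr p (fun ω => B ω ∧ Y ω = y) := by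
  rw [eq_sum_fiber p Y]
  refine Finset.sum_congr rfl fun y _ => ?_
  rw [cPr, div_mul_cancel₀ _ (hBY y)]
  exact congr_event p fun ω => and_assoc

end Pr

namespace cPr

variable {Omega α β : Type*} [Fintype Omega] [Fintype α] (p : Omega → ℝ)

theorem comp_eq_sum (f : Omega → α) (g : α → β) (c : β) (B : Omega → Prop) :
    cPr p (fun ω => g (f ω) = c) B = ∑ v with g v = c, cPr p (fun ω => f ω = v) B := by
  simp only [cPr, Pr.comp_and_eq_sum, Finset.sum_div]

theorem comp_congr_cond (f : Omega → α) (g : α → β) (c : β) {B B' : Omega → Prop}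
    (h : ∀ v, cPr p (fun ω => f ω = v) B = cPr p (fun ω => f ω = v) B') :
    cPr p (fun ω => g (f ω) = c) B = cPr p (fun ω => g (f ω) = c) B' := by
  simp only [comp_eq_sum, h]

theorem eq_sum_cPr_mul_cPr (A B : Omega → Prop) (Y : Omega → α)
    (hBY : ∀ y, Pr p (fun ω => B ω ∧ Y ω = y) ≠ 0) :
    cPr p A B = ∑ y, cPr p A (fun ω => B ω ∧ Y ω = y) * cPr p (fun ω => Y ω = y) B := by
  rw [cPr, Pr.and_eq_sum_cPr_mul p A B Y hBY, Finset.sum_div]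
  refine Finset.sum_congr rfl fun y _ => ?_
  rw [mul_div_assoc, cPr.eq_def p (fun ω => Y ω = y) B,
    Pr.congr_event p (A := fun ω => Y ω = y ∧ B ω) fun ω => and_comm]

theorem eq_of_indep {A B : Omega → Prop} (hB : Pr p B ≠ 0)
    (h : Pr p (fun ω => A ω ∧ B ω) = Pr p A * Pr p B) : cPr p A B = Pr p A := by
  rw [cPr, h, mul_div_cancel_right₀ _ hB]

theorem add_cPr_not (A : Omega → Prop) {B : Omega → Prop} (hB : Pr p B ≠ 0) :
    cPr p A B + cPr p (fun ω => ¬ A ω) B = 1 := by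
  rw [cPr, cPr, ← add_div, div_eq_one_iff_eq hB, Pr, Pr, Pr, ← Finset.sum_add_distrib]
  refine Finset.sum_congr rfl fun ω _ => ?_
  by_cases hA : A ω <;> simp [hA]

end cPr

theorem stmt_10_general {Omega : Type*} [Fintype Omega] (p : Omega → ℝ)
    (Yh Y S : Omega → Fin 2)
    (hpos : ∀ s y : Fin 2, 0 < Pr p (fun ω => S ω = s ∧ Y ω = y))
    (heo : ∀ yh y : Fin 2,
        cPr p (fun ω => Yh ω = yh) (fun ω => S ω = 0 ∧ Y ω = y)
          = cPr p (fun ω => Yh ω = yh) (fun ω => S ω = 1 ∧ Y ω = y))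
    (hind : ∀ y s : Fin 2,
        Pr p (fun ω => Y ω = y ∧ S ω = s)
          = Pr p (fun ω => Y ω = y) * Pr p (fun ω => S ω = s)) :
    ∀ a : Fin 2 → Fin 2,
      (cPr p (fun ω => a (Yh ω) = 0) (fun ω => S ω = 0)
        + cPr p (fun ω => a (Yh ω) = 1) (fun ω => S ω = 1)) / 2 = 1 / 2 := by
  intro a
  have hS_ne : ∀ s, Pr p (fun ω => S ω = s) ≠ 0 := fun s => by
    rw [Pr.eq_sum_fiber p Y]
    exact (Finset.sum_pos (fun y _ => hpos s y) Finset.univ_nonempty).ne'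
  have htotal : ∀ c s, cPr p (fun ω => a (Yh ω) = c) (fun ω => S ω = s)
      = ∑ y, cPr p (fun ω => a (Yh ω) = c) (fun ω => S ω = s ∧ Y ω = y)
          * Pr p (fun ω => Y ω = y) := fun c s => by
    rw [cPr.eq_sum_cPr_mul_cPr p _ _ Y fun y => (hpos s y).ne']
    simp only [cPr.eq_of_indep p (hS_ne s) (hind _ s)]
  have hinv : ∀ c, cPr p (fun ω => a (Yh ω) = c) (fun ω => S ω = 0)
      = cPr p (fun ω => a (Yh ω) = c) (fun ω => S ω = 1) := fun c => by
    simp only [htotal, cPr.comp_congr_cond p Yh a c (heo · _)]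
  have h_one_iff : (fun ω => a (Yh ω) = 1) = fun ω => ¬ a (Yh ω) = 0 := by
    funext ω; exact propext (by omega)
  rw [hinv, h_one_iff, cPr.add_cPr_not p _ (hS_ne 1)]

theorem stmt_10 {Omega : Type*} [Fintype Omega] (p : Omega → ℝ)
    (hp : ∀ ω, 0 ≤ p ω) (hsum : ∑ ω, p ω = 1)
    (Yh Y S : Omega → Fin 2)
    (hpos : ∀ s y : Fin 2, 0 < Pr p (fun ω => S ω = s ∧ Y ω = y))
    (heo : ∀ yh y : Fin 2,
        cPr p (fun ω => Yh ω = yh) (fun ω => S ω = 0 ∧ Y ω = y)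
          = cPr p (fun ω => Yh ω = yh) (fun ω => S ω = 1 ∧ Y ω = y))
    (hind : ∀ y s : Fin 2,
        Pr p (fun ω => Y ω = y ∧ S ω = s)
          = Pr p (fun ω => Y ω = y) * Pr p (fun ω => S ω = s)) :
    ∀ a : Fin 2 → Fin 2,
      (cPr p (fun ω => a (Yh ω) = 0) (fun ω => S ω = 0)
        + cPr p (fun ω => a (Yh ω) = 1) (fun ω => S ω = 1)) / 2 = 1 / 2 :=
  stmt_10_general p Yh Y S hpos heo hind
end
end

section
/- Let Ω be a finite probability space with binary random variables Ŷ, Y, S : Ω → {0,1}, with all events (S=s, Y=y) of positive probability, and suppose Ŷ satisfies equalized odds with respect to Y and S. If P(Y=0 | S=0) ≠ P(Y=0 | S=1) and P(Ŷ=1 | S=1, Y=0) ≠ P(Ŷ=1 | S=1, Y=1), then there exists an attack a : {0,1} → {0,1} whose balanced accuracy ½(P(a∘Ŷ=0 | S=0) + P(a∘Ŷ=1 | S=1)) is strictly greater than ½. -/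
open scoped Classical
noncomputable section

/-!
Under equalized odds, `P(Ŷ = 1 | S = s)` is the mixture `r₁ + (r₀ - r₁) · P(Y = 0 | S = s)` of the
group-independent rates `r_y = P(Ŷ = 1 | S, Y = y)`. Hence the two groups see different rates of
`Ŷ = 1` exactly when both `r₀ ≠ r₁` and the base rates `P(Y = 0 | S = s)` differ. Guessing `S = Ŷ`
or `S = 1 - Ŷ` then has balanced accuracy `½ ± ½ (P(Ŷ = 1 | S = 1) - P(Ŷ = 1 | S = 0))`, and one of
the two signs wins.
-/

section

variable {Ω : Type*} [Fintype Ω] (p : Ω → ℝ)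

lemma Pr_eq_add_and_not (A B : Ω → Prop) :
    Pr p A = Pr p (fun ω => A ω ∧ B ω) + Pr p (fun ω => A ω ∧ ¬ B ω) := by
  unfold Pr
  rw [← Finset.sum_add_distrib]
  refine Finset.sum_congr rfl fun ω _ => ?_
  by_cases hA : A ω <;> by_cases hB : B ω <;> simp [hA, hB]

lemma Pr_eq_add_fin_two (A : Ω → Prop) (X : Ω → Fin 2) :
    Pr p A = Pr p (fun ω => A ω ∧ X ω = 0) + Pr p (fun ω => A ω ∧ X ω = 1) := by
  rw [Pr_eq_add_and_not p A (fun ω => X ω = 0)]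
  have hne : ∀ x : Fin 2, ¬ x = 0 ↔ x = 1 := by decide
  simp only [hne]

lemma cPr_eq_add_fin_two (A B : Ω → Prop) (X : Ω → Fin 2) :
    cPr p A B = cPr p (fun ω => A ω ∧ X ω = 0) B + cPr p (fun ω => A ω ∧ X ω = 1) B := by
  simp only [cPr, ← add_div]
  rw [Pr_eq_add_fin_two p _ X]
  simp only [and_right_comm]

lemma cPr_fin_two_add_eq_one (X : Ω → Fin 2) {B : Ω → Prop} (hB : Pr p B ≠ 0) :
    cPr p (fun ω => X ω = 0) B + cPr p (fun ω => X ω = 1) B = 1 := by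
  simp only [cPr, ← add_div, and_comm (a := X _ = _)]
  rw [← Pr_eq_add_fin_two, div_self hB]

lemma cPr_and_eq_mul {A B C : Ω → Prop} (hBC : Pr p (fun ω => B ω ∧ C ω) ≠ 0) :
    cPr p (fun ω => A ω ∧ C ω) B = cPr p A (fun ω => B ω ∧ C ω) * cPr p C B := by
  simp only [cPr, and_assoc, and_comm (a := C _) (b := B _)]
  rw [div_mul_div_cancel₀ hBC]

lemma cPr_eq_total_fin_two (A B : Ω → Prop) (X : Ω → Fin 2)
    (hB : ∀ x, Pr p (fun ω => B ω ∧ X ω = x) ≠ 0) :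
    cPr p A B = cPr p A (fun ω => B ω ∧ X ω = 0) * cPr p (fun ω => X ω = 0) B
      + cPr p A (fun ω => B ω ∧ X ω = 1) * cPr p (fun ω => X ω = 1) B := by
  rw [cPr_eq_add_fin_two p A B X, cPr_and_eq_mul p (hB 0), cPr_and_eq_mul p (hB 1)]

end

lemma exists_attack_of_cPr_ne {Ω : Type*} [Fintype Ω] (p : Ω → ℝ) (Yh S : Ω → Fin 2)
    (hS : ∀ s, Pr p (fun ω => S ω = s) ≠ 0)
    (h : cPr p (fun ω => Yh ω = 1) (fun ω => S ω = 0)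
      ≠ cPr p (fun ω => Yh ω = 1) (fun ω => S ω = 1)) :
    ∃ a : Fin 2 → Fin 2,
      1 / 2 < (cPr p (fun ω => a (Yh ω) = 0) (fun ω => S ω = 0)
        + cPr p (fun ω => a (Yh ω) = 1) (fun ω => S ω = 1)) / 2 := by
  rcases h.lt_or_gt with hlt | hgt
  · refine ⟨id, ?_⟩
    simp only [id]
    rw [eq_sub_of_add_eq (cPr_fin_two_add_eq_one p Yh (hS 0))]
    linarith
  · refine ⟨Fin.rev, ?_⟩
    simp only [Fin.rev_eq_iff]
    rw [show Fin.rev (0 : Fin 2) = 1 from rfl, show Fin.rev (1 : Fin 2) = 0 from rfl,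
      eq_sub_of_add_eq (cPr_fin_two_add_eq_one p Yh (hS 1))]
    linarith

theorem stmt_12_general {Omega : Type*} [Fintype Omega] (p : Omega → ℝ)
    (Yh Y S : Omega → Fin 2)
    (hpos : ∀ s y : Fin 2, 0 < Pr p (fun ω => S ω = s ∧ Y ω = y))
    (heo : ∀ yh y : Fin 2,
        cPr p (fun ω => Yh ω = yh) (fun ω => S ω = 0 ∧ Y ω = y)
          = cPr p (fun ω => Yh ω = yh) (fun ω => S ω = 1 ∧ Y ω = y))
    (hY : cPr p (fun ω => Y ω = 0) (fun ω => S ω = 0)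
        ≠ cPr p (fun ω => Y ω = 0) (fun ω => S ω = 1))
    (hYh : cPr p (fun ω => Yh ω = 1) (fun ω => S ω = 1 ∧ Y ω = 0)
        ≠ cPr p (fun ω => Yh ω = 1) (fun ω => S ω = 1 ∧ Y ω = 1)) :
    ∃ a : Fin 2 → Fin 2,
      1 / 2 < (cPr p (fun ω => a (Yh ω) = 0) (fun ω => S ω = 0)
        + cPr p (fun ω => a (Yh ω) = 1) (fun ω => S ω = 1)) / 2 := by
  have hS : ∀ s, Pr p (fun ω => S ω = s) ≠ 0 := fun s => by
    rw [Pr_eq_add_fin_two p _ Y]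
    exact (add_pos (hpos s 0) (hpos s 1)).ne'
  set r : Fin 2 → ℝ := fun y => cPr p (fun ω => Yh ω = 1) (fun ω => S ω = 1 ∧ Y ω = y)
  set u : Fin 2 → ℝ := fun s => cPr p (fun ω => Y ω = 0) (fun ω => S ω = s)
  have hmix : ∀ s, cPr p (fun ω => Yh ω = 1) (fun ω => S ω = s) = r 1 + (r 0 - r 1) * u s := by
    intro s
    have hr : ∀ y, cPr p (fun ω => Yh ω = 1) (fun ω => S ω = s ∧ Y ω = y) = r y := by
      fin_cases s
      exacts [heo 1, fun _ => rfl]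
    rw [cPr_eq_total_fin_two p _ _ Y fun y => (hpos s y).ne', hr, hr,
      eq_sub_of_add_eq' (cPr_fin_two_add_eq_one p Y (hS s))]
    ring
  refine exists_attack_of_cPr_ne p Yh S hS fun h => hY ?_
  rw [hmix, hmix] at h
  exact mul_left_cancel₀ (sub_ne_zero.mpr hYh) (add_left_cancel h)

theorem stmt_12 {Omega : Type*} [Fintype Omega] (p : Omega → ℝ)
    (hp : ∀ ω, 0 ≤ p ω) (hsum : ∑ ω, p ω = 1)
    (Yh Y S : Omega → Fin 2)
    (hpos : ∀ s y : Fin 2, 0 < Pr p (fun ω => S ω = s ∧ Y ω = y))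
    (heo : ∀ yh y : Fin 2,
        cPr p (fun ω => Yh ω = yh) (fun ω => S ω = 0 ∧ Y ω = y)
          = cPr p (fun ω => Yh ω = yh) (fun ω => S ω = 1 ∧ Y ω = y))
    (hY : cPr p (fun ω => Y ω = 0) (fun ω => S ω = 0)
        ≠ cPr p (fun ω => Y ω = 0) (fun ω => S ω = 1))
    (hYh : cPr p (fun ω => Yh ω = 1) (fun ω => S ω = 1 ∧ Y ω = 0)
        ≠ cPr p (fun ω => Yh ω = 1) (fun ω => S ω = 1 ∧ Y ω = 1)) :
    ∃ a : Fin 2 → Fin 2,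
      1 / 2 < (cPr p (fun ω => a (Yh ω) = 0) (fun ω => S ω = 0)
        + cPr p (fun ω => a (Yh ω) = 1) (fun ω => S ω = 1)) / 2 :=
  stmt_12_general p Yh Y S hpos heo hY hYh
end
end

section
/- Let Ω be a finite probability space and Ŷ, S : Ω → {0,1} with P(S=0) > 0 and P(S=1) > 0. Then for every attack b : {0,1} → {0,1}, the balanced accuracy ½(P(b∘Ŷ=0 | S=0) + P(b∘Ŷ=1 | S=1)) is at most ½(1 + |P(Ŷ=1 | S=1) − P(Ŷ=1 | S=0)|). -/
open scoped Classical
noncomputable section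

/-!
Writing `a s = P(Ŷ = 1 | S = s)`, every event `{b ∘ Ŷ ∈ T}` has conditional probability
`[0 ∈ T] + ([1 ∈ T] - [0 ∈ T]) · a s`, since `Ŷ` takes only two values. Hence post-processing
by `b` can only shrink the demographic parity gap `|a 1 - a 0|`, and the balanced accuracy of `b`
equals `(1 + P(b Ŷ = 1 | S = 1) - P(b Ŷ = 1 | S = 0)) / 2`, which is at most `(1 + |a 1 - a 0|) / 2`.
-/

section FiniteProbability

variable {Omega : Type*} [Fintype Omega] (p : Omega → ℝ)

lemma cPr_not {B : Omega → Prop} (A : Omega → Prop) (hB : Pr p B ≠ 0) :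
    cPr p (fun ω => ¬ A ω) B = 1 - cPr p A B := by
  have hsplit : Pr p (fun ω => ¬ A ω ∧ B ω) = Pr p B - Pr p (fun ω => A ω ∧ B ω) := by
    rw [eq_sub_iff_add_eq, Pr, Pr, Pr, ← Finset.sum_add_distrib]
    refine Finset.sum_congr rfl fun ω _ => ?_
    by_cases hA : A ω <;> by_cases hB : B ω <;> simp [hA, hB]
  rw [cPr, cPr, hsplit, sub_div, div_self hB]

lemma Pr_comp_fin_two_and (Y : Omega → Fin 2) (T : Fin 2 → Prop) (B : Omega → Prop) :
    Pr p (fun ω => T (Y ω) ∧ B ω)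
      = (if T 0 then 1 else 0) * Pr p B
        + ((if T 1 then 1 else 0) - (if T 0 then 1 else 0)) * Pr p (fun ω => Y ω = 1 ∧ B ω) := by
  rw [Pr, Pr, Pr, Finset.mul_sum, Finset.mul_sum, ← Finset.sum_add_distrib]
  refine Finset.sum_congr rfl fun ω _ => ?_
  rcases Fin.exists_fin_two.mp ⟨Y ω, rfl⟩ with hY | hY <;>
    by_cases hB : B ω <;> by_cases hT0 : T 0 <;> by_cases hT1 : T 1 <;> simp [hY, hB, hT0, hT1]

lemma cPr_comp_fin_two (Y : Omega → Fin 2) (T : Fin 2 → Prop) {B : Omega → Prop}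
    (hB : Pr p B ≠ 0) :
    cPr p (fun ω => T (Y ω)) B
      = (if T 0 then 1 else 0)
        + ((if T 1 then 1 else 0) - (if T 0 then 1 else 0)) * cPr p (fun ω => Y ω = 1) B := by
  rw [cPr, cPr, Pr_comp_fin_two_and]
  field_simp

lemma abs_sub_cPr_comp_fin_two_le (Y : Omega → Fin 2) (T : Fin 2 → Prop) {B₀ B₁ : Omega → Prop}
    (hB₀ : Pr p B₀ ≠ 0) (hB₁ : Pr p B₁ ≠ 0) :
    |cPr p (fun ω => T (Y ω)) B₁ - cPr p (fun ω => T (Y ω)) B₀|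
      ≤ |cPr p (fun ω => Y ω = 1) B₁ - cPr p (fun ω => Y ω = 1) B₀| := by
  rw [cPr_comp_fin_two p Y T hB₁, cPr_comp_fin_two p Y T hB₀, add_sub_add_left_eq_sub, ← mul_sub,
    abs_mul]
  refine mul_le_of_le_one_left (abs_nonneg _) ?_
  split_ifs <;> norm_num

end FiniteProbability

theorem stmt_14_general {Omega : Type*} [Fintype Omega] (p : Omega → ℝ)
    (Yh S : Omega → Fin 2)
    (hS0 : 0 < Pr p (fun ω => S ω = 0)) (hS1 : 0 < Pr p (fun ω => S ω = 1)) :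
    ∀ b : Fin 2 → Fin 2,
      (cPr p (fun ω => b (Yh ω) = 0) (fun ω => S ω = 0)
        + cPr p (fun ω => b (Yh ω) = 1) (fun ω => S ω = 1)) / 2
      ≤ (1 + |cPr p (fun ω => Yh ω = 1) (fun ω => S ω = 1)
            - cPr p (fun ω => Yh ω = 1) (fun ω => S ω = 0)|) / 2 := by
  intro b
  have hzero : (fun ω => b (Yh ω) = 0) = fun ω => ¬ b (Yh ω) = 1 :=
    funext fun ω => propext (by omega)
  have hgap := abs_sub_cPr_comp_fin_two_le p Yh (fun y => b y = 1) hS0.ne' hS1.ne'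
  rw [hzero, cPr_not p _ hS0.ne']
  linarith [le_abs_self (cPr p (fun ω => b (Yh ω) = 1) (fun ω => S ω = 1)
    - cPr p (fun ω => b (Yh ω) = 1) (fun ω => S ω = 0))]

theorem stmt_14 {Omega : Type*} [Fintype Omega] (p : Omega → ℝ)
    (hp : ∀ ω, 0 ≤ p ω) (hsum : ∑ ω, p ω = 1)
    (Yh S : Omega → Fin 2)
    (hS0 : 0 < Pr p (fun ω => S ω = 0)) (hS1 : 0 < Pr p (fun ω => S ω = 1)) :
    ∀ b : Fin 2 → Fin 2,
      (cPr p (fun ω => b (Yh ω) = 0) (fun ω => S ω = 0)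
        + cPr p (fun ω => b (Yh ω) = 1) (fun ω => S ω = 1)) / 2
      ≤ (1 + |cPr p (fun ω => Yh ω = 1) (fun ω => S ω = 1)
            - cPr p (fun ω => Yh ω = 1) (fun ω => S ω = 0)|) / 2 :=
  stmt_14_general p Yh S hS0 hS1
end
end

section
/- Let Ω be a finite probability space, Ŷ : Ω → [0,1] with finite range, and S : Ω → {0,1} with P(S=0) > 0 and P(S=1) > 0. If Ŷ and S are independent, then for every threshold υ ∈ [0,1] and every function f : [0,1] → [0,1], the thresholded attack Ŝ = 1_{[υ,1]}∘f∘Ŷ satisfies ½(P(Ŝ=0 | S=0) + P(Ŝ=1 | S=1)) = ½. -/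
open scoped Classical
noncomputable section

/-!
Independence makes conditioning on `S` irrelevant: for any set `A`, both `P(Ŷ ∉ A | S = 0)`
and `P(Ŷ ∈ A | S = 1)` equal their unconditional values, which sum to `1`. The thresholded
attack `1_{[υ,1]} ∘ f` predicts `1` exactly when `Ŷ ∈ {x | υ ≤ f x}`.
-/

section
variable {Omega : Type*} [Fintype Omega] (p : Omega → ℝ)

theorem Pr_add_Pr_not (A : Omega → Prop) :
    Pr p A + Pr p (fun ω => ¬ A ω) = ∑ ω, p ω := by
  rw [Pr, Pr, ← Finset.sum_add_distrib]
  exact Finset.sum_congr rfl fun ω _ => by by_cases h : A ω <;> simp [h]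

variable {p}

theorem cPr_eq_Pr_of_indep {A B : Omega → Prop}
    (hAB : Pr p (fun ω => A ω ∧ B ω) = Pr p A * Pr p B) (hB : Pr p B ≠ 0) :
    cPr p A B = Pr p A := by
  rw [cPr, hAB, mul_div_cancel_right₀ _ hB]

theorem balancedAccuracy_eq_half_of_indep {α : Type*} (hsum : ∑ ω, p ω = 1)
    (Y : Omega → α) (S : Omega → Fin 2)
    (hS0 : Pr p (fun ω => S ω = 0) ≠ 0) (hS1 : Pr p (fun ω => S ω = 1) ≠ 0)
    (hind : ∀ (A : Set α) (s : Fin 2),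
      Pr p (fun ω => Y ω ∈ A ∧ S ω = s) = Pr p (fun ω => Y ω ∈ A) * Pr p (fun ω => S ω = s))
    (A : Set α) :
    (cPr p (fun ω => Y ω ∉ A) (fun ω => S ω = 0)
      + cPr p (fun ω => Y ω ∈ A) (fun ω => S ω = 1)) / 2 = 1 / 2 := by
  rw [cPr_eq_Pr_of_indep (A := fun ω => Y ω ∉ A) (hind Aᶜ 0) hS0,
    cPr_eq_Pr_of_indep (hind A 1) hS1, add_comm, Pr_add_Pr_not, hsum]

end

theorem stmt_15_general {Omega : Type*} [Fintype Omega] (p : Omega → ℝ)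
    (hsum : ∑ ω, p ω = 1)
    (Yh : Omega → ℝ)
    (S : Omega → Fin 2)
    (hS0 : 0 < Pr p (fun ω => S ω = 0)) (hS1 : 0 < Pr p (fun ω => S ω = 1))
    (hind : ∀ (A : Set ℝ) (s : Fin 2),
        Pr p (fun ω => Yh ω ∈ A ∧ S ω = s)
          = Pr p (fun ω => Yh ω ∈ A) * Pr p (fun ω => S ω = s)) :
    ∀ (υ : ℝ), υ ∈ Set.Icc (0 : ℝ) 1 →
      ∀ f : ℝ → ℝ, (∀ x, f x ∈ Set.Icc (0 : ℝ) 1) →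
        (cPr p (fun ω => (if υ ≤ f (Yh ω) then (1 : Fin 2) else 0) = 0)
            (fun ω => S ω = 0)
          + cPr p (fun ω => (if υ ≤ f (Yh ω) then (1 : Fin 2) else 0) = 1)
            (fun ω => S ω = 1)) / 2 = 1 / 2 := by
  intro υ _ f _
  simpa using balancedAccuracy_eq_half_of_indep hsum Yh S hS0.ne' hS1.ne' hind {x | υ ≤ f x}

theorem stmt_15 {Omega : Type*} [Fintype Omega] (p : Omega → ℝ)
    (hp : ∀ ω, 0 ≤ p ω) (hsum : ∑ ω, p ω = 1)
    (Yh : Omega → ℝ) (hYh : ∀ ω, Yh ω ∈ Set.Icc (0 : ℝ) 1)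
    (S : Omega → Fin 2)
    (hS0 : 0 < Pr p (fun ω => S ω = 0)) (hS1 : 0 < Pr p (fun ω => S ω = 1))
    (hind : ∀ (A : Set ℝ) (s : Fin 2),
        Pr p (fun ω => Yh ω ∈ A ∧ S ω = s)
          = Pr p (fun ω => Yh ω ∈ A) * Pr p (fun ω => S ω = s)) :
    ∀ (υ : ℝ), υ ∈ Set.Icc (0 : ℝ) 1 →
      ∀ f : ℝ → ℝ, (∀ x, f x ∈ Set.Icc (0 : ℝ) 1) →
        (cPr p (fun ω => (if υ ≤ f (Yh ω) then (1 : Fin 2) else 0) = 0)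
            (fun ω => S ω = 0)
          + cPr p (fun ω => (if υ ≤ f (Yh ω) then (1 : Fin 2) else 0) = 1)
            (fun ω => S ω = 1)) / 2 = 1 / 2 :=
  stmt_15_general p hsum Yh S hS0 hS1 hind
end
end
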